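/- Assume there exists a ∈ (0,∞) with q₀(a) > 0. Then for p = 1: sup_{y∈D_1} |y(x)| = 1 for every x ∈ ℝ; in particular, the solutions of the equation do not tend in whole to zero as |x| → ∞. -/

import Mathlib

open MeasureTheory Filter Topology
open scoped ENNReal

/-- `y` is a solution of `-y' + q y = f` on `ℝ`: it is locally absolutely
continuous and its a.e. derivative `y'` equals `q y - f`. -/
def IsSolution (q f y : ℝ → ℝ) : Prop :=
  LocallyIntegrable (fun t => q t * y t - f t) volume ∧
  ∀ a b : ℝ, y b - y a = ∫ t in a..b, (q t * y t - f t)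

/-- The set `D_p` of solutions `y ∈ L_p(ℝ)` of `-y' + q y = f` with right-hand
side `f ∈ L_p(ℝ)` of unit norm. -/
def Dset (q : ℝ → ℝ) (p : ℝ≥0∞) : Set (ℝ → ℝ) :=
  {y | ∃ f : ℝ → ℝ, MemLp f p volume ∧ eLpNorm f p volume = 1 ∧
    IsSolution q f y ∧ MemLp y p volume}

/-!
With `Q t = ∫_x^t q`, the weight `e^{-Q}` turns `-y' + q y = f` into
`y x = y b e^{-Q b} + ∫_x^b f e^{-Q}`. As `q ≥ 0` the weight is at most `1` for `b ≥ x`, and an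
`L¹` function takes arbitrarily small values to the right of `x`, so `|y x| ≤ ‖f‖₁ = 1`.

Conversely, let `f` be the normalized indicator of a short interval `(x, b]` with `∫_x^b q < ε`.
The variation-of-constants solution `y s = e^{Q s} ∫_s^b f e^{-Q}` vanishes to the right of `b`,
and `q₀(a) > 0` makes `Q` grow at least linearly, so `y` decays exponentially to the left and
lies in `L¹`; moreover `y x ≥ e^{-Q b} > 1 - ε`. As `x` is arbitrary, the supremum is `1`
everywhere and the solutions do not tend to zero uniformly.
-/

open Set Function

def IsPrimitive (F f : ℝ → ℝ) : Prop :=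
  ∀ a b : ℝ, F b - F a = ∫ t in a..b, f t

theorem LipschitzOnWith.comp_absolutelyContinuousOnInterval {X Y : Type*} [PseudoMetricSpace X]
    [PseudoMetricSpace Y] {φ : X → Y} {K : NNReal} {s : Set X} {f : ℝ → X} {a b : ℝ}
    (hφ : LipschitzOnWith K φ s) (hf : AbsolutelyContinuousOnInterval f a b)
    (hfs : MapsTo f (uIcc a b) s) : AbsolutelyContinuousOnInterval (φ ∘ f) a b := by
  rw [absolutelyContinuousOnInterval_iff] at hf ⊢
  intro ε hε
  obtain ⟨δ, hδ, hf⟩ := hf (ε / (K + 1)) (by positivity)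
  refine ⟨δ, hδ, fun E hE hlen => ?_⟩
  calc ∑ i ∈ Finset.range E.1, dist ((φ ∘ f) (E.2 i).1) ((φ ∘ f) (E.2 i).2)
      ≤ ∑ i ∈ Finset.range E.1, K * dist (f (E.2 i).1) (f (E.2 i).2) :=
        Finset.sum_le_sum fun i hi =>
          hφ.dist_le_mul _ (hfs (hE.1 i hi).1) _ (hfs (hE.1 i hi).2)
    _ = K * ∑ i ∈ Finset.range E.1, dist (f (E.2 i).1) (f (E.2 i).2) := by rw [Finset.mul_sum]
    _ ≤ K * (ε / (K + 1)) := by gcongr; exact (hf E hE hlen).le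
    _ < ε := by
        rw [mul_div_assoc', div_lt_iff₀ (by positivity)]
        nlinarith

theorem ContDiff.comp_absolutelyContinuousOnInterval {E : Type*} [NormedAddCommGroup E]
    [NormedSpace ℝ E] {φ : ℝ → E} {f : ℝ → ℝ} {a b : ℝ} (hφ : ContDiff ℝ 1 φ)
    (hf : AbsolutelyContinuousOnInterval f a b) : AbsolutelyContinuousOnInterval (φ ∘ f) a b := by
  obtain ⟨M, hM⟩ := hf.exists_bound
  obtain ⟨K, hK⟩ := hφ.contDiffOn.exists_lipschitzOnWith one_ne_zero (convex_closedBall 0 M)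
    (isCompact_closedBall 0 M)
  exact hK.comp_absolutelyContinuousOnInterval hf fun x hx => mem_closedBall_zero_iff.2 (hM x hx)

theorem MeasureTheory.LocallyIntegrable.intervalIntegrable {E : Type*} [NormedAddCommGroup E]
    {μ : Measure ℝ} {f : ℝ → E} (hf : LocallyIntegrable f μ) (a b : ℝ) :
    IntervalIntegrable f μ a b :=
  (hf.integrableOn_isCompact isCompact_uIcc).intervalIntegrable

theorem MeasureTheory.LocallyIntegrable.isPrimitive_integral {f : ℝ → ℝ}
    (hf : LocallyIntegrable f volume) (c : ℝ) : IsPrimitive (fun x => ∫ t in c..x, f t) f :=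
  fun a b => intervalIntegral.integral_interval_sub_left (hf.intervalIntegrable c b)
    (hf.intervalIntegrable c a)

namespace IsPrimitive

variable {F G f g : ℝ → ℝ}

theorem neg (hF : IsPrimitive F f) : IsPrimitive (fun x => -F x) (fun x => -f x) := fun a b => by
  rw [intervalIntegral.integral_neg, ← hF a b]; ring

theorem eq_add_integral (hF : IsPrimitive F f) (c : ℝ) : F = fun x => F c + ∫ t in c..x, f t :=
  funext fun x => by linarith [hF c x]

theorem absolutelyContinuousOnInterval (hF : IsPrimitive F f) (hf : LocallyIntegrable f volume)
    (a b : ℝ) : AbsolutelyContinuousOnInterval F a b := by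
  rw [hF.eq_add_integral a]
  exact (LipschitzWith.const (F a)).lipschitzOnWith.absolutelyContinuousOnInterval.fun_add
    ((hf.intervalIntegrable a b).absolutelyContinuousOnInterval_intervalIntegral left_mem_uIcc)

theorem continuous (hF : IsPrimitive F f) (hf : LocallyIntegrable f volume) : Continuous F := by
  rw [hF.eq_add_integral 0]
  exact continuous_const.add (intervalIntegral.continuous_primitive hf.intervalIntegrable 0)

theorem ae_hasDerivAt (hF : IsPrimitive F f) (hf : LocallyIntegrable f volume) :
    ∀ᵐ x, HasDerivAt F (f x) x := by
  filter_upwards [LocallyIntegrable.ae_hasDerivAt_integral hf] with x hx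
  rw [hF.eq_add_integral 0]
  exact (hx 0).const_add _

theorem monotone (hF : IsPrimitive F f) (hf : ∀ x, 0 ≤ f x) : Monotone F := fun s t hst =>
  sub_nonneg.1 (hF s t ▸ intervalIntegral.integral_nonneg hst fun r _ => hf r)

theorem of_absolutelyContinuousOnInterval (hF : ∀ a b, AbsolutelyContinuousOnInterval F a b)
    (hf : ∀ᵐ x, HasDerivAt F (f x) x) : IsPrimitive F f := fun a b => by
  rw [← (hF a b).integral_deriv_eq_sub]
  exact intervalIntegral.integral_congr_ae (by filter_upwards [hf] with x hx _ using hx.deriv)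

theorem mul (hF : IsPrimitive F f) (hf : LocallyIntegrable f volume) (hG : IsPrimitive G g)
    (hg : LocallyIntegrable g volume) :
    IsPrimitive (fun x => F x * G x) (fun x => f x * G x + F x * g x) :=
  of_absolutelyContinuousOnInterval
    (fun a b => (hF.absolutelyContinuousOnInterval hf a b).fun_mul
      (hG.absolutelyContinuousOnInterval hg a b))
    (by filter_upwards [hF.ae_hasDerivAt hf, hG.ae_hasDerivAt hg] with x h₁ h₂ using h₁.mul h₂)

theorem exp (hF : IsPrimitive F f) (hf : LocallyIntegrable f volume) :
    IsPrimitive (fun x => Real.exp (F x)) (fun x => Real.exp (F x) * f x) :=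
  of_absolutelyContinuousOnInterval
    (fun a b => Real.contDiff_exp.comp_absolutelyContinuousOnInterval
      (hF.absolutelyContinuousOnInterval hf a b))
    (by filter_upwards [hF.ae_hasDerivAt hf] with x h using h.exp)

end IsPrimitive

theorem MeasureTheory.LocallyIntegrable.isPrimitive_integral_left {f : ℝ → ℝ}
    (hf : LocallyIntegrable f volume) (c : ℝ) :
    IsPrimitive (fun x => ∫ t in x..c, f t) fun x => -f x := by
  simpa only [intervalIntegral.integral_symm c] using (hf.isPrimitive_integral c).neg

theorem MeasureTheory.Integrable.eLpNorm_one_eq_ofReal_integral_norm {α E : Type*}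
    [MeasurableSpace α] {μ : Measure α} [NormedAddCommGroup E] {f : α → E}
    (hf : Integrable f μ) : eLpNorm f 1 μ = ENNReal.ofReal (∫ x, ‖f x‖ ∂μ) := by
  rw [eLpNorm_one_eq_lintegral_enorm, ofReal_integral_norm_eq_lintegral_enorm hf]

theorem MeasureTheory.Integrable.exists_ge_norm_lt {E : Type*} [NormedAddCommGroup E]
    {y : ℝ → E} (hy : Integrable y volume) (x : ℝ) {ε : ℝ} (hε : 0 < ε) :
    ∃ b ≥ x, ‖y b‖ < ε := by
  by_contra! h
  have hconst : IntegrableOn (fun _ => ε) (Ici x) volume :=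
    hy.norm.integrableOn.mono' aestronglyMeasurable_const
      (by filter_upwards [ae_restrict_mem measurableSet_Ici] with t ht
          rw [Real.norm_of_nonneg hε.le]; exact h t ht)
  simp [integrableOn_const_iff, hε.ne'] at hconst

theorem abs_intervalIntegral_le_integral_abs {f g : ℝ → ℝ} (hf : Integrable f volume) {s b : ℝ}
    (hsb : s ≤ b) (hgf : ∀ t ∈ Ioc s b, |g t| ≤ |f t|) : |∫ t in s..b, g t| ≤ ∫ t, |f t| :=
  calc ‖∫ t in s..b, g t‖ ≤ ∫ t in s..b, |f t| :=
        intervalIntegral.norm_integral_le_of_norm_le hsb (Eventually.of_forall hgf)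
          hf.abs.intervalIntegrable
    _ ≤ ∫ t, |f t| := by
        rw [intervalIntegral.integral_of_le hsb]
        exact setIntegral_le_integral hf.abs (Eventually.of_forall fun _ => abs_nonneg _)

theorem IsSolution.eq_mul_exp_add_integral {q f y : ℝ → ℝ} (hq : LocallyIntegrable q volume)
    (hy : IsSolution q f y) (x b : ℝ) :
    y x = y b * Real.exp (-∫ s in x..b, q s)
      + ∫ t in x..b, f t * Real.exp (-∫ s in x..t, q s) := by
  have hQ := (hq.isPrimitive_integral x).neg
  have hE := hQ.exp hq.neg
  have hEloc : LocallyIntegrable (fun t => Real.exp (-∫ s in x..t, q s) * -q t) volume :=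
    hq.neg.continuous_mul (Real.continuous_exp.comp (hQ.continuous hq.neg))
  have key := IsPrimitive.mul hy.2 hy.1 hE hEloc x b
  rw [intervalIntegral.integral_congr (g := fun t => -(f t * Real.exp (-∫ s in x..t, q s)))
    (fun t _ => by ring), intervalIntegral.integral_neg] at key
  simp only [intervalIntegral.integral_same, neg_zero, Real.exp_zero, mul_one] at key
  linarith

theorem abs_le_one_of_mem_Dset {q y : ℝ → ℝ} (hq₀ : ∀ x, 0 ≤ q x)
    (hq : LocallyIntegrable q volume) (hy : y ∈ Dset q 1) (x : ℝ) : |y x| ≤ 1 := by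
  obtain ⟨f, hf, hf1, hsol, hyL1⟩ := hy
  have hfint : Integrable f volume := memLp_one_iff_integrable.mp hf
  have hfnorm : ∫ t, |f t| = 1 := by
    rw [hfint.eLpNorm_one_eq_ofReal_integral_norm, ENNReal.ofReal_eq_one] at hf1
    simpa only [Real.norm_eq_abs] using hf1
  have hweight : ∀ t, x ≤ t → Real.exp (-∫ s in x..t, q s) ≤ 1 := fun t ht =>
    Real.exp_le_one_iff.2 (neg_nonpos.2 (intervalIntegral.integral_nonneg ht fun s _ => hq₀ s))
  have hstep : ∀ b ≥ x, |y x| ≤ |y b| + 1 := fun b hb => by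
    have hint : |∫ t in x..b, f t * Real.exp (-∫ s in x..t, q s)| ≤ 1 :=
      hfnorm ▸ abs_intervalIntegral_le_integral_abs hfint hb fun t ht => by
        rw [abs_mul, Real.abs_exp]
        exact mul_le_of_le_one_right (abs_nonneg _) (hweight t ht.1.le)
    have hyb : |y b * Real.exp (-∫ s in x..b, q s)| ≤ |y b| := by
      rw [abs_mul, Real.abs_exp]
      exact mul_le_of_le_one_right (abs_nonneg _) (hweight b hb)
    rw [hsol.eq_mul_exp_add_integral hq x b]
    exact (abs_add_le _ _).trans (add_le_add hyb hint)
  refine le_of_forall_pos_lt_add fun ε hε => ?_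
  obtain ⟨b, hb, hyb⟩ := (memLp_one_iff_integrable.mp hyL1).exists_ge_norm_lt x hε
  rw [Real.norm_eq_abs] at hyb
  linarith [hstep b hb]

theorem le_intervalIntegral_of_le_integral_window {q : ℝ → ℝ} (hq₀ : ∀ x, 0 ≤ q x)
    (hq : LocallyIntegrable q volume) {a c : ℝ} (ha : 0 < a) (hc₀ : 0 ≤ c)
    (hc : ∀ z, c ≤ ∫ t in z - a..z + a, q t) {s u : ℝ} (hsu : s ≤ u) :
    c / (2 * a) * (u - s) - c ≤ ∫ t in s..u, q t := by
  have hcount : ∀ n : ℕ, ∀ s u : ℝ, s + 2 * a * n ≤ u → n * c ≤ ∫ t in s..u, q t := by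
    intro n
    induction n with
    | zero =>
      intro s u h
      simpa using intervalIntegral.integral_nonneg (by simpa using h) fun t _ => hq₀ t
    | succ n ih =>
      intro s u h
      have hwin : c ≤ ∫ t in s..s + 2 * a, q t := by
        convert hc (s + a) using 2 <;> ring
      rw [← intervalIntegral.integral_add_adjacent_intervals (hq.intervalIntegrable s (s + 2 * a))
        (hq.intervalIntegrable _ u)]
      push_cast at h ⊢
      linarith [ih (s + 2 * a) u (by linarith)]
  have h2a : 0 < 2 * a := by positivity
  set n := ⌊(u - s) / (2 * a)⌋₊
  have hn : (u - s) / (2 * a) - 1 < n := Nat.sub_one_lt_floor _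
  have hnu : s + 2 * a * n ≤ u := by
    have := Nat.floor_le (div_nonneg (sub_nonneg.2 hsu) h2a.le)
    rw [le_div_iff₀ h2a] at this
    linarith
  calc c / (2 * a) * (u - s) - c = ((u - s) / (2 * a) - 1) * c := by ring
    _ ≤ n * c := by gcongr
    _ ≤ ∫ t in s..u, q t := hcount n s u hnu

/-- `greenSolution q f x b s = ∫_s^b e^{-∫_s^t q} f t dt`; the kernel is split at the base point `x`
so that both factors are primitives. -/
noncomputable def greenSolution (q f : ℝ → ℝ) (x b s : ℝ) : ℝ :=
  Real.exp (∫ t in x..s, q t) * ∫ t in s..b, f t * Real.exp (-∫ r in x..t, q r)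

section greenSolution

variable {q f : ℝ → ℝ} {x b : ℝ}

theorem continuous_greenSolution (hq : LocallyIntegrable q volume)
    (hf : LocallyIntegrable f volume) : Continuous (greenSolution q f x b) := by
  have hQc := (hq.isPrimitive_integral x).continuous hq
  have hg : LocallyIntegrable (fun t => f t * Real.exp (-∫ r in x..t, q r)) volume :=
    hf.mul_continuous (Real.continuous_exp.comp hQc.neg)
  exact (Real.continuous_exp.comp hQc).mul ((hg.isPrimitive_integral_left b).continuous hg.neg)

theorem isSolution_greenSolution (hq : LocallyIntegrable q volume)
    (hf : LocallyIntegrable f volume) : IsSolution q f (greenSolution q f x b) := by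
  have hQ := hq.isPrimitive_integral x
  have hQc := hQ.continuous hq
  have hg : LocallyIntegrable (fun t => f t * Real.exp (-∫ r in x..t, q r)) volume :=
    hf.mul_continuous (Real.continuous_exp.comp hQc.neg)
  have hy := (hQ.exp hq).mul (hq.continuous_mul (Real.continuous_exp.comp hQc))
    (hg.isPrimitive_integral_left b) hg.neg
  refine ⟨(hq.mul_continuous (continuous_greenSolution hq hf)).sub hf, fun u v => ?_⟩
  rw [greenSolution, greenSolution, hy u v]
  refine intervalIntegral.integral_congr fun t _ => ?_
  simp only [greenSolution, Real.exp_neg]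
  field_simp
  ring

theorem greenSolution_eq_zero_of_lt (hsupp : support f ⊆ Ioc x b) {s : ℝ} (hs : b < s) :
    greenSolution q f x b s = 0 := by
  rw [greenSolution, intervalIntegral.integral_symm b s, intervalIntegral.integral_of_le hs.le,
    setIntegral_eq_zero_of_forall_eq_zero fun t ht => ?_, neg_zero, mul_zero]
  rw [notMem_support.1 fun h => (hsupp h).2.not_gt ht.1, zero_mul]

theorem abs_greenSolution_le (hq₀ : ∀ x, 0 ≤ q x) (hf : Integrable f volume)
    (hsupp : support f ⊆ Ioc x b) {s : ℝ} (hs : s ≤ b) :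
    |greenSolution q f x b s| ≤ (∫ t, |f t|) * Real.exp (∫ t in x..s, q t) := by
  rw [greenSolution, abs_mul, Real.abs_exp, mul_comm]
  gcongr
  refine abs_intervalIntegral_le_integral_abs hf hs fun t _ => ?_
  rw [abs_mul, Real.abs_exp]
  by_cases ht : t ∈ support f
  · exact mul_le_of_le_one_right (abs_nonneg _) (Real.exp_le_one_iff.2 (neg_nonpos.2
      (intervalIntegral.integral_nonneg (hsupp ht).1.le fun r _ => hq₀ r)))
  · simp [notMem_support.1 ht]

theorem integrable_greenSolution (hq₀ : ∀ x, 0 ≤ q x) (hq : LocallyIntegrable q volume)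
    {k c : ℝ} (hk : 0 < k) (hgrowth : ∀ s u, s ≤ u → k * (u - s) - c ≤ ∫ t in s..u, q t)
    (hf : Integrable f volume) (hsupp : support f ⊆ Ioc x b) :
    Integrable (greenSolution q f x b) volume := by
  set Q : ℝ → ℝ := fun t => ∫ r in x..t, q r
  have hIic : IntegrableOn (greenSolution q f x b) (Iic b) volume := by
    refine ((integrableOn_exp_mul_Iic hk b).const_mul
      ((∫ t, |f t|) * Real.exp (Q b + c - k * b))).mono'
      (continuous_greenSolution hq hf.locallyIntegrable).aestronglyMeasurable ?_
    filter_upwards [ae_restrict_mem measurableSet_Iic] with s hs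
    have hQs : Q s ≤ Q b + c - k * b + k * s := by
      linarith [hq.isPrimitive_integral x s b, hgrowth s b hs]
    calc ‖greenSolution q f x b s‖ ≤ (∫ t, |f t|) * Real.exp (Q s) :=
          abs_greenSolution_le hq₀ hf hsupp hs
      _ ≤ (∫ t, |f t|) * Real.exp (Q b + c - k * b) * Real.exp (k * s) := by
          rw [mul_assoc, ← Real.exp_add]
          gcongr
  have hIoi : IntegrableOn (greenSolution q f x b) (Ioi b) volume :=
    integrableOn_zero.congr_fun (fun s hs => (greenSolution_eq_zero_of_lt hsupp hs).symm)
      measurableSet_Ioi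
  exact integrableOn_univ.1 (by simpa only [Iic_union_Ioi] using hIic.union hIoi)

theorem exp_neg_integral_mul_le_greenSolution (hq₀ : ∀ x, 0 ≤ q x)
    (hq : LocallyIntegrable q volume) (hf : LocallyIntegrable f volume) (hf₀ : ∀ t, 0 ≤ f t)
    (hxb : x ≤ b) :
    Real.exp (-∫ t in x..b, q t) * ∫ t in x..b, f t ≤ greenSolution q f x b x := by
  have hQ := hq.isPrimitive_integral x
  rw [greenSolution, intervalIntegral.integral_same, Real.exp_zero, one_mul,
    ← intervalIntegral.integral_const_mul]
  refine intervalIntegral.integral_mono_on hxb ((hf.intervalIntegrable x b).const_mul _)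
    ((hf.mul_continuous (Real.continuous_exp.comp (hQ.continuous hq).neg)).intervalIntegrable x b)
    fun t ht => ?_
  rw [mul_comm]
  exact mul_le_mul_of_nonneg_left (Real.exp_le_exp.2 (neg_le_neg (hQ.monotone hq₀ ht.2))) (hf₀ t)

end greenSolution

theorem exists_mem_Dset_exp_neg_integral_le {q : ℝ → ℝ} (hq₀ : ∀ x, 0 ≤ q x)
    (hq : LocallyIntegrable q volume) {k c : ℝ} (hk : 0 < k)
    (hgrowth : ∀ s u, s ≤ u → k * (u - s) - c ≤ ∫ t in s..u, q t) {x b : ℝ} (hxb : x < b) :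
    ∃ y ∈ Dset q 1, Real.exp (-∫ t in x..b, q t) ≤ y x := by
  set w : ℝ → ℝ := (Ioc x b).indicator fun _ => (b - x)⁻¹
  have hw₀ : ∀ t, 0 ≤ w t := indicator_nonneg fun _ _ => inv_nonneg.2 (sub_nonneg.2 hxb.le)
  have hw_supp : support w ⊆ Ioc x b := support_indicator_subset
  have hw_int : Integrable w volume :=
    (integrable_indicator_iff measurableSet_Ioc).2 (integrableOn_const measure_Ioc_lt_top.ne)
  have hmass : ∫ _ in Ioc x b, (b - x)⁻¹ = 1 := by simp [hxb.le, (sub_pos.2 hxb).ne']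
  have hw_total : ∫ t, w t = 1 := by rw [integral_indicator measurableSet_Ioc, hmass]
  have hw_interval : ∫ t in x..b, w t = 1 := by
    rw [intervalIntegral.integral_of_le hxb.le, setIntegral_indicator measurableSet_Ioc,
      inter_self, hmass]
  have hw_norm : eLpNorm w 1 volume = 1 := by
    rw [hw_int.eLpNorm_one_eq_ofReal_integral_norm]
    simp_rw [Real.norm_of_nonneg (hw₀ _), hw_total, ENNReal.ofReal_one]
  refine ⟨greenSolution q w x b, ⟨w, memLp_one_iff_integrable.2 hw_int, hw_norm,
    isSolution_greenSolution hq hw_int.locallyIntegrable, memLp_one_iff_integrable.2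
      (integrable_greenSolution hq₀ hq hk hgrowth hw_int hw_supp)⟩, ?_⟩
  simpa only [hw_interval, mul_one] using
    exp_neg_integral_mul_le_greenSolution hq₀ hq hw_int.locallyIntegrable hw₀ hxb.le

theorem exists_mem_Dset_sub_lt_abs {q : ℝ → ℝ} (hq₀ : ∀ x, 0 ≤ q x)
    (hq : LocallyIntegrable q volume) {a : ℝ} (ha : 0 < a)
    (hqa : 0 < ⨅ z : ℝ, ∫ t in z - a..z + a, q t) (x : ℝ) {ε : ℝ} (hε : 0 < ε) :
    ∃ y ∈ Dset q 1, 1 - ε < |y x| := by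
  have hc : ∀ z, (⨅ z : ℝ, ∫ t in z - a..z + a, q t) ≤ ∫ t in z - a..z + a, q t :=
    ciInf_le ⟨0, by
      rintro _ ⟨z, rfl⟩
      exact intervalIntegral.integral_nonneg (by linarith) fun t _ => hq₀ t⟩
  obtain ⟨b, hbε, hxb⟩ : ∃ b, ∫ t in x..b, q t < ε ∧ x < b :=
    (((hq.isPrimitive_integral x).continuous hq).tendsto x
      |>.eventually (gt_mem_nhds (by simpa using hε))
      |>.filter_mono nhdsWithin_le_nhds |>.and self_mem_nhdsWithin).exists (f := 𝓝[>] x)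
  obtain ⟨y, hy, hyx⟩ := exists_mem_Dset_exp_neg_integral_le hq₀ hq (by positivity)
    (fun s u hsu => le_intervalIntegral_of_le_integral_window hq₀ hq ha hqa.le hc hsu) hxb
  exact ⟨y, hy, by linarith [Real.add_one_le_exp (-∫ t in x..b, q t), le_abs_self (y x)]⟩

theorem stmt17 (q : ℝ → ℝ) (hq : ∀ x, 0 ≤ q x)
    (hqloc : LocallyIntegrable q volume)
    (a : ℝ) (ha : 0 < a) (hqa : 0 < ⨅ z : ℝ, ∫ t in z - a..z + a, q t) :
    (∀ x : ℝ, sSup ((fun y : ℝ → ℝ => |y x|) '' Dset q 1) = 1) ∧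
    ¬ (∀ ε : ℝ, 0 < ε → ∃ x₀ : ℝ, ∀ y ∈ Dset q 1,
        ∀ x : ℝ, x₀ ≤ |x| → |y x| ≤ ε) := by
  have hnear := exists_mem_Dset_sub_lt_abs hq hqloc ha hqa
  refine ⟨fun x => ?_, fun hdecay => ?_⟩
  · obtain ⟨y, hy, -⟩ := hnear x one_pos
    refine csSup_eq_of_forall_le_of_forall_lt_exists_gt ⟨_, y, hy, rfl⟩
      (by rintro _ ⟨y, hy, rfl⟩; exact abs_le_one_of_mem_Dset hq hqloc hy x) fun r hr => ?_
    obtain ⟨y, hy, hyx⟩ := hnear x (sub_pos.2 hr)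
    exact ⟨_, ⟨y, hy, rfl⟩, by linarith⟩
  · obtain ⟨x₀, hx₀⟩ := hdecay (1 / 2) one_half_pos
    obtain ⟨y, hy, hyx⟩ := hnear |x₀| one_half_pos
    linarith [hx₀ y hy |x₀| ((le_abs_self x₀).trans_eq (abs_abs x₀).symm)]
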